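/- Let s ∈ {A,B}^ω be a balanced word. Then the limit f_A(s) = lim_{n→∞} |s_{⟦0,n⟧}|_A / (n+1) exists (and lies in [0,1]); it is called the frequency of A in s. -/
import Mathlib


open Filter Topology

attribute [local instance] Classical.propDecidable

/-- The two players. -/
inductive Player | A | B
deriving DecidableEq

/-- A cell of the grid `ℤ^d`. -/
abbrev Cell (d : ℕ) := Fin d → ℤ

/-- A (possibly partial) colouring of the grid: `none` means uncoloured.
Colours are natural numbers; the alphabet of size `m` is `{0, …, m-1}`. -/
abbrev Board (d : ℕ) := Cell d → Option ℕ

/-- A finite pattern, encoded as a list of tiles (cell, colour). -/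
abbrev PatternCode (d : ℕ) := List (Cell d × ℕ)

/-- A move: `none` is a pass, `some (i, a)` colours cell `i` with colour `a`. -/
abbrev MoveD (d : ℕ) := Option (Cell d × ℕ)

/-- Code for an SFT: alphabet size together with the list of forbidden patterns. -/
abbrev SFTCode (d : ℕ) := ℕ × List (PatternCode d)

/-- A (positional) strategy: a move for every position. -/
abbrev Strategy (d : ℕ) := Board d → MoveD d

def emptyBoard (d : ℕ) : Board d := fun _ => none

/-- The pattern `p` occurs in the board `x` translated by `t`. -/
def occursAt {d : ℕ} (p : PatternCode d) (x : Board d) (t : Cell d) : Prop :=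
  ∀ q ∈ p, x (t + q.1) = some q.2

/-- A position is final when a translate of some forbidden pattern occurs. -/
def isFinal {d : ℕ} (F : List (PatternCode d)) (x : Board d) : Prop :=
  ∃ p ∈ F, ∃ t : Cell d, occursAt p x t

/-- Legality of a move in the game with alphabet `{0,…,m-1}` played on `E`:
a pass is always legal, and a colouring move must pick an uncoloured cell of `E`
and a colour of the alphabet. -/
def legalMove {d : ℕ} (m : ℕ) (E : Set (Cell d)) (x : Board d) : MoveD d → Prop
  | none => True
  | some (i, a) => i ∈ E ∧ x i = none ∧ a < m

def applyMove {d : ℕ} (x : Board d) : MoveD d → Board d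
  | none => x
  | some (i, a) => Function.update x i (some a)

/-- One step of the game: the move proposed by the strategy is played if legal
(an illegal move is treated as a pass). -/
noncomputable def step {d : ℕ} (m : ℕ) (E : Set (Cell d)) (st : Strategy d)
    (x : Board d) : Board d :=
  if legalMove m E x (st x) then applyMove x (st x) else x

/-- The play generated by strategies `stA`, `stB` with turn order `s`,
starting from the empty board. -/
noncomputable def play {d : ℕ} (m : ℕ) (E : Set (Cell d)) (s : ℕ → Player)
    (stA stB : Strategy d) : ℕ → Board d
  | 0 => emptyBoard d
  | t + 1 => step m E (match s t with | .A => stA | .B => stB) (play m E s stA stB t)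

/-- The alternating turn order: `A` plays first. -/
def alt : ℕ → Player := fun t => if t % 2 = 0 then .A else .B

/-- Player `A` has a winning strategy in the Domino game with turn order `s`:
a final position is eventually reached whatever `B` plays. -/
def AWins {d : ℕ} (m : ℕ) (F : List (PatternCode d)) (E : Set (Cell d))
    (s : ℕ → Player) : Prop :=
  ∃ stA : Strategy d, ∀ stB : Strategy d, ∃ t : ℕ, isFinal F (play m E s stA stB t)

/-- Player `B` has a winning strategy in the Domino game with turn order `s`:
a final position is never reached whatever `A` plays. -/
def BWins {d : ℕ} (m : ℕ) (F : List (PatternCode d)) (E : Set (Cell d))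
    (s : ℕ → Player) : Prop :=
  ∃ stB : Strategy d, ∀ stA : Strategy d, ∀ t : ℕ, ¬ isFinal F (play m E s stA stB t)

/-- The Domino game problem on `ℤ^d` (alternating turn order, `A` first). -/
def DGame (d : ℕ) : SFTCode d → Prop :=
  fun c => AWins c.1 c.2 Set.univ alt

/-- The number of occurrences of the letter `A` in the factor `s_{⟦i, i+n⟧}`. -/
def countA (s : ℕ → Player) (i n : ℕ) : ℕ :=
  ((Finset.range (n + 1)).filter (fun l => s (i + l) = Player.A)).card

/-- The word `s` is balanced: any two factors of the same length have numbers of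
occurrences of `A` differing by at most 1. -/
def BalancedWord (s : ℕ → Player) : Prop :=
  ∀ i j n : ℕ, ((countA s i n : ℤ) - (countA s j n : ℤ)).natAbs ≤ 1

/-- Cumulative count of `A` in the first `n` letters. -/
def cfun (s : ℕ → Player) : ℕ → ℕ
  | 0 => 0
  | n + 1 => countA s 0 n

lemma countA_eq_sum (s : ℕ → Player) (i n : ℕ) :
    countA s i n = ∑ l ∈ Finset.range (n + 1), if s (i + l) = Player.A then 1 else 0 := by
  rw [countA, Finset.card_filter]

lemma cfun_add (s : ℕ → Player) (m n : ℕ) :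
    cfun s (m + 1 + (n + 1)) = cfun s (m + 1) + countA s (m + 1) n := by
  have he : m + 1 + (n + 1) = (m + n + 1) + 1 := by ring
  rw [he]
  show countA s 0 (m + n + 1) = countA s 0 m + countA s (m + 1) n
  rw [countA_eq_sum, countA_eq_sum, countA_eq_sum]
  have : m + n + 1 + 1 = (m + 1) + (n + 1) := by ring
  rw [this, Finset.sum_range_add]
  congr 1
  apply Finset.sum_congr rfl
  intro l _
  norm_num

lemma cfun_subadd (s : ℕ → Player) (hs : BalancedWord s) (m n : ℕ) :
    cfun s (m + n) ≤ cfun s m + cfun s n + 1 := by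
  match m, n with
  | 0, n => simp [cfun]
  | m + 1, 0 => simp [cfun]
  | m + 1, n + 1 =>
    rw [cfun_add]
    have hb := hs (m + 1) 0 n
    have : countA s (m + 1) n ≤ countA s 0 n + 1 := by omega
    have hc : cfun s (n + 1) = countA s 0 n := rfl
    omega

/-- For every balanced word `s ∈ {A,B}^ω`, the frequency
`f_A(s) = lim_{n→∞} |s_{⟦0,n⟧}|_A / (n+1)` exists and lies in `[0, 1]`. -/
theorem balanced_frequency_exists (s : ℕ → Player) (hs : BalancedWord s) :
    ∃ L : ℝ, L ∈ Set.Icc (0 : ℝ) 1 ∧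
      Tendsto (fun n : ℕ => (countA s 0 n : ℝ) / (n + 1)) atTop (𝓝 L) := by
  set u : ℕ → ℝ := fun n => (cfun s n : ℝ) + 1 with hu
  have hsub : Subadditive u := by
    intro m n
    have := cfun_subadd s hs m n
    have h' : (cfun s (m + n) : ℝ) ≤ (cfun s m : ℝ) + (cfun s n : ℝ) + 1 := by
      exact_mod_cast this
    simp only [hu]
    linarith
  have hbdd : BddBelow (Set.range fun n : ℕ => u n / n) := by
    refine ⟨0, ?_⟩
    rintro x ⟨n, rfl⟩
    have h1 : (0 : ℝ) ≤ u n := by positivity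
    exact div_nonneg h1 (Nat.cast_nonneg n)
  have hlim := hsub.tendsto_lim hbdd
  have h2 : Tendsto (fun n : ℕ => (cfun s n : ℝ) / n) atTop (𝓝 hsub.lim) := by
    have h3 : Tendsto (fun n : ℕ => u n / n - 1 / n) atTop (𝓝 (hsub.lim - 0)) :=
      hlim.sub tendsto_one_div_atTop_nhds_zero_nat
    rw [sub_zero] at h3
    convert h3 using 2 with n
    rw [hu]
    rw [add_div]
    ring
  have h4 : Tendsto (fun n : ℕ => (countA s 0 n : ℝ) / (n + 1)) atTop (𝓝 hsub.lim) := by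
    have := h2.comp (tendsto_add_atTop_nat 1)
    convert this using 2 with n
    show (countA s 0 n : ℝ) / (n + 1) = (cfun s (n + 1) : ℝ) / ((n + 1 : ℕ) : ℝ)
    have : cfun s (n + 1) = countA s 0 n := rfl
    rw [this]
    push_cast
    ring
  refine ⟨hsub.lim, ⟨?_, ?_⟩, h4⟩
  · exact ge_of_tendsto' h4 fun n => by positivity
  · refine le_of_tendsto' h4 fun n => ?_
    rw [div_le_one (by positivity)]
    have : countA s 0 n ≤ n + 1 := by
      calc countA s 0 n ≤ (Finset.range (n + 1)).card := Finset.card_filter_le _ _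
        _ = n + 1 := Finset.card_range _
    exact_mod_cast this
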